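/- Let G be a connected graph without isolated vertices and at least 2 vertices. Then γ_{gr}^{×2}(G) = 2 if and only if G is a complete graph. -/
import Mathlib


open SimpleGraph

variable {V : Type*}

/-- The closed neighborhood of a vertex. -/
def cnbr (G : SimpleGraph V) (v : V) : Set V := insert v (G.neighborSet v)

/-- The number of vertices in the list `l` that dominate `u` (i.e. whose closed
neighborhood contains `u`). -/
noncomputable def domCount (G : SimpleGraph V) (u : V) (l : List V) : ℕ :=
  {w | w ∈ l ∧ u ∈ cnbr G w}.ncard

/-- A double neighborhood sequence (DNS): a sequence of distinct vertices in which each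
vertex dominates some vertex dominated at most once by its predecessors. -/
def IsDNS (G : SimpleGraph V) (l : List V) : Prop :=
  l.Nodup ∧ ∀ i : Fin l.length, ∃ u ∈ cnbr G (l.get i), domCount G u (l.take i) ≤ 1

/-- A double dominating sequence (DDS): a DNS whose underlying set is doubly dominating. -/
def IsDDS (G : SimpleGraph V) (l : List V) : Prop :=
  IsDNS G l ∧ ∀ v, 2 ≤ domCount G v l

/-- The Grundy double domination number: maximum length of a DDS. -/
noncomputable def gddn (G : SimpleGraph V) : ℕ :=
  sSup {n | ∃ l : List V, IsDDS G l ∧ l.length = n}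

/-- The maximum double neighborhood number: maximum length of a DNS. -/
noncomputable def mdnn (G : SimpleGraph V) : ℕ :=
  sSup {n | ∃ l : List V, IsDNS G l ∧ l.length = n}

/-- A legal (Grundy domination) sequence. -/
def IsLegal (G : SimpleGraph V) (l : List V) : Prop :=
  l.Nodup ∧ ∀ i : Fin l.length, ∃ u ∈ cnbr G (l.get i), domCount G u (l.take i) = 0

/-- A dominating sequence: legal sequence whose underlying set dominates. -/
def IsDomSeq (G : SimpleGraph V) (l : List V) : Prop :=
  IsLegal G l ∧ ∀ v, 1 ≤ domCount G v l

/-- The Grundy domination number: maximum length of a dominating sequence. -/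
noncomputable def grundy (G : SimpleGraph V) : ℕ :=
  sSup {n | ∃ l : List V, IsDomSeq G l ∧ l.length = n}

/-- The double domination number: minimum size of a double dominating set. -/
noncomputable def ddomNum (G : SimpleGraph V) : ℕ :=
  sInf {n | ∃ D : Set V, (∀ v, 2 ≤ {w | w ∈ D ∧ v ∈ cnbr G w}.ncard) ∧ D.ncard = n}

lemma mem_cnbr {G : SimpleGraph V} {u w : V} : u ∈ cnbr G w ↔ u = w ∨ G.Adj w u := by
  simp [cnbr]

lemma self_mem_cnbr (G : SimpleGraph V) (v : V) : v ∈ cnbr G v := Set.mem_insert _ _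

lemma domCount_le_length (G : SimpleGraph V) (u : V) (l : List V) :
    domCount G u l ≤ l.length := by
  classical
  calc {w | w ∈ l ∧ u ∈ cnbr G w}.ncard
      ≤ (↑l.toFinset : Set V).ncard :=
        Set.ncard_le_ncard (fun w hw => by simp [hw.1]) (l.toFinset.finite_toSet)
    _ = l.toFinset.card := Set.ncard_coe_finset _
    _ ≤ l.length := l.toFinset_card_le

lemma domCount_top (u : V) {l : List V} (h : l.Nodup) :
    domCount (⊤ : SimpleGraph V) u l = l.length := by
  classical
  have hset : {w | w ∈ l ∧ u ∈ cnbr (⊤ : SimpleGraph V) w} = (↑l.toFinset : Set V) := by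
    ext w
    simp only [Set.mem_setOf_eq, List.coe_toFinset, Set.mem_setOf_eq, and_iff_left_iff_imp]
    intro _
    rcases eq_or_ne u w with h' | h'
    · exact mem_cnbr.2 (Or.inl h')
    · exact mem_cnbr.2 (Or.inr (by simp [h'.symm]))
  rw [domCount, hset, Set.ncard_coe_finset, List.toFinset_card_of_nodup h]

lemma bddAbove_gddn [Fintype V] (G : SimpleGraph V) :
    BddAbove {n | ∃ l : List V, IsDDS G l ∧ l.length = n} := by
  refine ⟨Fintype.card V, fun n hn => ?_⟩
  obtain ⟨l, hl, rfl⟩ := hn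
  exact hl.1.1.length_le_card

/-- a connected graph on at least two vertices has Grundy double domination
number 2 iff it is complete. -/
theorem stmt5 [Fintype V] (G : SimpleGraph V) (hc : G.Connected)
    (h2 : 2 ≤ Fintype.card V) (hiso : ∀ v : V, ∃ u, G.Adj v u) :
    gddn G = 2 ↔ G = ⊤ := by
  classical
  constructor
  · intro h
    -- extract a DDS of length 2
    have hne : {n | ∃ l : List V, IsDDS G l ∧ l.length = n}.Nonempty := by
      rcases Set.eq_empty_or_nonempty {n | ∃ l : List V, IsDDS G l ∧ l.length = n} with he | hne
      · exfalso
        rw [gddn, he] at h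
        simp at h
      · exact hne
    have hmem := Nat.sSup_mem hne (bddAbove_gddn G)
    rw [← gddn, h] at hmem
    obtain ⟨l, hl, hlen⟩ := hmem
    obtain ⟨a, b, rfl⟩ := List.length_eq_two.1 hlen
    have hab : a ≠ b := by
      have := hl.1.1
      simp at this
      exact this
    -- each vertex is dominated by both a and b
    have hdom : ∀ v : V, v ∈ cnbr G a ∧ v ∈ cnbr G b := by
      intro v
      have h2v := hl.2 v
      have hsub : {w | w ∈ [a, b] ∧ v ∈ cnbr G w} ⊆ ({a, b} : Set V) := by
        intro w hw
        simpa using hw.1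
      have heq : {w | w ∈ [a, b] ∧ v ∈ cnbr G w} = ({a, b} : Set V) :=
        Set.eq_of_subset_of_ncard_le hsub (by rw [Set.ncard_pair hab]; exact h2v)
          (Set.toFinite _)
      constructor
      · have : a ∈ {w | w ∈ [a, b] ∧ v ∈ cnbr G w} := heq ▸ (by simp : a ∈ ({a,b} : Set V))
        exact this.2
      · have : b ∈ {w | w ∈ [a, b] ∧ v ∈ cnbr G w} := heq ▸ (by simp : b ∈ ({a,b} : Set V))
        exact this.2
    -- show complete
    ext x y
    simp only [top_adj]
    constructor
    · exact fun h' => h'.ne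
    · intro hxy
      by_contra hnadj
      -- a, b different from x and y
      have hax : a ≠ x := by
        rintro rfl
        rcases mem_cnbr.1 (hdom y).1 with h' | h'
        · exact hxy h'.symm
        · exact hnadj h'
      have hbx : b ≠ x := by
        rintro rfl
        rcases mem_cnbr.1 (hdom y).2 with h' | h'
        · exact hxy h'.symm
        · exact hnadj h'
      have hycx : y ∉ cnbr G x := by
        intro hy
        rcases mem_cnbr.1 hy with h' | h'
        · exact hxy h'.symm
        · exact hnadj h'
      -- DDS [a, x, b] of length 3
      have hdds : IsDDS G [a, x, b] := by
        refine ⟨⟨by simp [hax, hab, hbx.symm], ?_⟩, ?_⟩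
        · intro i
          fin_cases i
          · exact ⟨a, self_mem_cnbr G a, le_trans (domCount_le_length _ _ _) (by simp)⟩
          · exact ⟨x, self_mem_cnbr G x, le_trans (domCount_le_length _ _ _) (by simp)⟩
          · refine ⟨y, (hdom y).2, ?_⟩
            have hset : {w | w ∈ [a, x] ∧ y ∈ cnbr G w} = ({a} : Set V) := by
              ext w
              simp only [Set.mem_setOf_eq, List.mem_cons, List.mem_singleton,
                Set.mem_singleton_iff, List.not_mem_nil, or_false]
              constructor
              · rintro ⟨h1 | h1, h2⟩
                · exact h1
                · subst h1; exact absurd h2 hycx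
              · rintro rfl; exact ⟨Or.inl rfl, (hdom y).1⟩
            show domCount G y [a, x] ≤ 1
            rw [domCount, hset, Set.ncard_singleton]
        · intro v
          have hsub : ({a, b} : Set V) ⊆ {w | w ∈ [a, x, b] ∧ v ∈ cnbr G w} := by
            rintro w (rfl | rfl)
            · exact ⟨by simp, (hdom v).1⟩
            · exact ⟨by simp, (hdom v).2⟩
          calc 2 = ({a, b} : Set V).ncard := (Set.ncard_pair hab).symm
            _ ≤ _ := Set.ncard_le_ncard hsub (Set.toFinite _)
      have h3 : (3 : ℕ) ∈ {n | ∃ l : List V, IsDDS G l ∧ l.length = n} := ⟨_, hdds, rfl⟩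
      have := le_csSup (bddAbove_gddn G) h3
      rw [← gddn, h] at this
      omega
  · rintro rfl
    apply le_antisymm
    · apply csSup_le
      · obtain ⟨a, b, hab⟩ := Fintype.exists_pair_of_one_lt_card h2
        refine ⟨2, [a, b], ⟨⟨by simp [hab], ?_⟩, ?_⟩, rfl⟩
        · intro i
          refine ⟨[a,b].get i, self_mem_cnbr _ _, ?_⟩
          refine le_trans (domCount_le_length _ _ _) ?_
          have : i.val < 2 := i.2
          simp only [List.length_take, List.length_cons, List.length_nil]
          omega
        · intro v
          rw [domCount_top v (by simp [hab])]
          simp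
      · intro n hn
        obtain ⟨l, hl, rfl⟩ := hn
        by_contra hgt
        push_neg at hgt
        have h3 : 2 < l.length := hgt
        have := hl.1.2 ⟨2, h3⟩
        obtain ⟨u, _, hcnt⟩ := this
        have htake : (l.take 2).Nodup := (List.take_sublist 2 l).nodup hl.1.1
        rw [domCount_top u htake] at hcnt
        rw [List.length_take] at hcnt
        omega
    · apply le_csSup (bddAbove_gddn _)
      obtain ⟨a, b, hab⟩ := Fintype.exists_pair_of_one_lt_card h2
      refine ⟨[a, b], ⟨⟨by simp [hab], ?_⟩, ?_⟩, rfl⟩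
      · intro i
        refine ⟨[a,b].get i, self_mem_cnbr _ _, ?_⟩
        refine le_trans (domCount_le_length _ _ _) ?_
        have : i.val < 2 := i.2
        simp only [List.length_take, List.length_cons, List.length_nil]
        omega
      · intro v
        rw [domCount_top v (by simp [hab])]
        simp
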